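/- arXiv:1412.5669 — 5 statements merged into one kernel-verified Lean document; each statement's English description precedes it below -/
import Mathlib

section
/- Let G be a finite directed graph with N nodes whose edges carry non-negative integer weights bounded by M. Call a cycle 'Zeno' if all its edges have weight 0. Then every path starting at a fixed initial node whose total weight exceeds M·N contains a node that lies on some cycle that is not Zeno. -/
/-!
Cutting a Zeno cycle out of a path does not change its weight. So if no node of a path lies on
a non-Zeno cycle, cutting out cycles one at a time leaves a simple path of the same weight; it
has at most `N` nodes, hence at most `N - 1` edges of weight at most `M` each.
-/

/-- Total weight of a path given as a list of visited nodes. -/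
def pathWeight {V : Type*} (w : V → V → ℕ) : List V → ℕ
  | [] => 0
  | [_] => 0
  | a :: b :: rest => w a b + pathWeight w (b :: rest)

section

variable {V : Type*} {E : V → V → Prop} {w : V → V → ℕ}

theorem pathWeight_append_cons (w : V → V → ℕ) :
    ∀ (l₁ : List V) (v : V) (l₂ : List V),
      pathWeight w (l₁ ++ v :: l₂) = pathWeight w (l₁ ++ [v]) + pathWeight w (v :: l₂)
  | [], v, l₂ => by cases l₂ <;> simp [pathWeight]
  | [a], v, l₂ => by simp [pathWeight]
  | a :: b :: t, v, l₂ => by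
      have ih := pathWeight_append_cons w (b :: t) v l₂
      simp only [List.cons_append, pathWeight] at ih ⊢
      omega

theorem pathWeight_append_cons_append_cons (w : V → V → ℕ) (l₁ l₂ l₃ : List V) (x : V) :
    pathWeight w (l₁ ++ x :: l₂ ++ x :: l₃) =
      pathWeight w (l₁ ++ x :: l₃) + pathWeight w (x :: l₂ ++ [x]) := by
  have h₁ := pathWeight_append_cons w l₁ x (l₂ ++ x :: l₃)
  have h₂ := pathWeight_append_cons w (x :: l₂) x l₃
  have h₃ := pathWeight_append_cons w l₁ x l₃
  simp only [List.cons_append, List.append_assoc] at h₁ h₂ h₃ ⊢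
  omega

theorem pathWeight_le_mul_length {M : ℕ} (hw : ∀ a b, E a b → w a b ≤ M) :
    ∀ {p : List V}, p.IsChain E → pathWeight w p ≤ M * (p.length - 1)
  | [], _ => by simp [pathWeight]
  | [a], _ => by simp [pathWeight]
  | a :: b :: r, h => by
      rw [List.isChain_cons_cons] at h
      have ih := pathWeight_le_mul_length hw h.2
      have hab := hw a b h.1
      simp only [pathWeight, List.length_cons, Nat.add_sub_cancel] at ih ⊢
      rw [Nat.mul_succ]
      omega

theorem List.exists_eq_append_cons_append_cons_of_not_nodup {α : Type*} {l : List α}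
    (h : ¬ l.Nodup) : ∃ l₁ x l₂ l₃, l = l₁ ++ x :: l₂ ++ x :: l₃ := by
  obtain ⟨x, hx⟩ := List.exists_duplicate_iff_not_nodup.mpr h
  obtain ⟨r₁, r₂, rfl, hx₁, hx₂⟩ := List.cons_sublist_iff.mp (List.duplicate_iff_sublist.mp hx)
  obtain ⟨l₁, l₂, rfl⟩ := List.append_of_mem hx₁
  obtain ⟨l₂', l₃, rfl⟩ := List.append_of_mem (List.singleton_sublist.mp hx₂)
  exact ⟨l₁, x, l₂ ++ l₂', l₃, by simp⟩

/-- A cycle through `v` is a path of at least two nodes from `v` to `v`; since weights are natural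
numbers, it is non-Zeno iff its weight is positive. -/
def OnNonZenoCycle (E : V → V → Prop) (w : V → V → ℕ) (v : V) : Prop :=
  ∃ c : List V, 2 ≤ c.length ∧ c.head? = some v ∧ c.getLast? = some v ∧
    c.IsChain E ∧ 0 < pathWeight w c

theorem exists_nodup_isChain_pathWeight_eq {p : List V} (hp : p.IsChain E)
    (hZeno : ∀ v ∈ p, ¬ OnNonZenoCycle E w v) :
    ∃ q : List V, q.Nodup ∧ q.IsChain E ∧ pathWeight w q = pathWeight w p := by
  by_cases hnd : p.Nodup
  · exact ⟨p, hnd, hp, rfl⟩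
  obtain ⟨l₁, x, l₂, l₃, rfl⟩ := List.exists_eq_append_cons_append_cons_of_not_nodup hnd
  have hcycle : (x :: l₂ ++ [x]).IsChain E := hp.infix ⟨l₁, l₃, by simp⟩
  have hcycle_zero : pathWeight w (x :: l₂ ++ [x]) = 0 := by
    by_contra hpos
    exact hZeno x (by simp)
      ⟨_, by simp, rfl, List.getLast?_concat, hcycle, Nat.pos_of_ne_zero hpos⟩
  have hshort : (l₁ ++ [x] ++ l₃).IsChain E :=
    List.IsChain.append_overlap (hp.infix ⟨[], l₂ ++ x :: l₃, by simp⟩)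
      (hp.infix ⟨l₁ ++ x :: l₂, [], by simp⟩) (List.cons_ne_nil x [])
  have _hshorter : (l₁ ++ [x] ++ l₃).length < (l₁ ++ x :: l₂ ++ x :: l₃).length := by simp
  obtain ⟨q, hq, hqE, hqw⟩ := exists_nodup_isChain_pathWeight_eq hshort fun v hv =>
    hZeno v (by simp only [List.mem_append, List.mem_cons] at hv ⊢; tauto)
  refine ⟨q, hq, hqE, ?_⟩
  rw [hqw, pathWeight_append_cons_append_cons, hcycle_zero]
  simp
termination_by p.length

end

/-- Every path from `g0` of total weight exceeding `M * N` (N the number of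
nodes) contains a node lying on a non-Zeno cycle. -/
theorem stmt0 {V : Type*} [Fintype V] (E : V → V → Prop) (w : V → V → ℕ)
    (M : ℕ) (hw : ∀ a b, E a b → w a b ≤ M) (g0 : V) :
    ∀ p : List V, p.head? = some g0 → List.Chain' E p →
      M * Fintype.card V < pathWeight w p →
      ∃ v ∈ p, ∃ c : List V, 2 ≤ c.length ∧ c.head? = some v ∧
        c.getLast? = some v ∧ List.Chain' E c ∧ 0 < pathWeight w c := by
  intro p _ hp hweight
  by_contra hZeno
  obtain ⟨q, hq, hqE, hqw⟩ :=
    exists_nodup_isChain_pathWeight_eq hp fun v hv hv' => hZeno ⟨v, hv, hv'⟩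
  have hlen : q.length - 1 ≤ Fintype.card V := (Nat.sub_le _ _).trans hq.length_le_card
  have := (pathWeight_le_mul_length hw hqE).trans (Nat.mul_le_mul_left M hlen)
  omega
end

section
/- The orthogonal projection onto the first coordinate of the intersection of a finite union of sets of the form {n + δ + α·1 : δ ∈ Δ, α ≥ 0} (where Δ is an open simplex with integer vertices inside a unit hypercube and 1 = (1,...,1)) with a convex polyhedron defined by finitely many constraints of the form x_i ∼ n_i (∼ ∈ {<, ≤, =, ≥, >}, n_i ∈ ℕ) is a union of intervals each of whose endpoints is an integer (or the interval is unbounded above). -/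
/-- Comparison operators appearing in guards. -/
inductive CmpOp | lt | le | eq | ge | gt

/-- Satisfaction of an atomic guard constraint. -/
def CmpOp.sat : CmpOp → ℝ → ℝ → Prop
  | .lt, a, b => a < b
  | .le, a, b => a ≤ b
  | .eq, a, b => a = b
  | .ge, a, b => b ≤ a
  | .gt, a, b => b < a

/-- The region simplex determined by a zero-pattern `z` and a weak ordering `ρ`
of the fractional parts: an open simplex (together with its lattice faces)
inside the unit hypercube with integer vertices. -/
def regionSimplex {r : ℕ} (z : Fin (r + 1) → Prop) (ρ : Fin (r + 1) → Fin (r + 1) → Prop) :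
    Set (Fin (r + 1) → ℝ) :=
  {x | (∀ i, 0 ≤ x i ∧ x i < 1) ∧ (∀ i, x i = 0 ↔ z i) ∧
       (∀ i j, x i ≤ x j ↔ ρ i j)}

/-- The simplicial trail `{n + δ + α·𝟙 : δ ∈ Δ, α ≥ 0}`. -/
def simplicialTrail {r : ℕ} (n : Fin (r + 1) → ℕ) (Δ : Set (Fin (r + 1) → ℝ)) :
    Set (Fin (r + 1) → ℝ) :=
  {x | ∃ δ ∈ Δ, ∃ α : ℝ, 0 ≤ α ∧ ∀ i, x i = (n i : ℝ) + δ i + α}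

/-!
Fix `m : ℤ` and `t₀, t ∈ (m, m + 1)`. The map `f u = ⌊u⌋ + (fract u) ^ p`, where
`p = log (t - m) / log (t₀ - m)` makes `f t₀ = t`, is a strictly increasing lift of a degree-one
circle map that fixes every integer. Applied coordinatewise it maps each simplicial trail into
itself: writing `x = n + δ + α • 𝟙`, we get `f ∘ x = n + δ' + f α • 𝟙` with
`δ' i = f (δ i + α) - f α`, and `δ'` lies in the same region simplex because `f` is strictly
monotone and `f (α + 1) = f α + 1`. Being strictly monotone and fixing the integers, `f` also
preserves every guard `x i ∼ k`. Hence if one point of `(m, m + 1)` lies in the projection, every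
point does.
-/

open Function Int

theorem CmpOp.sat_map_iff {f : ℝ → ℝ} (hf : StrictMono f) (op : CmpOp) (a b : ℝ) :
    op.sat (f a) (f b) ↔ op.sat a b := by
  cases op <;> simp only [CmpOp.sat, hf.lt_iff_lt, hf.le_iff_le, hf.injective.eq_iff]

theorem strictMono_floor_add_fract_rpow {p : ℝ} (hp : 0 < p) :
    StrictMono fun u : ℝ => ⌊u⌋ + fract u ^ p := by
  intro u v huv
  rcases (floor_mono huv.le).eq_or_lt with hfloor | hfloor
  · have hfract : fract u < fract v := by
      simpa only [fract, hfloor, sub_lt_sub_iff_right] using huv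
    simp only [hfloor, add_lt_add_iff_left]
    exact Real.rpow_lt_rpow (fract_nonneg u) hfract hp
  · have hu : fract u ^ p < 1 := Real.rpow_lt_one (fract_nonneg u) (fract_lt_one u) hp
    have hv : 0 ≤ fract v ^ p := Real.rpow_nonneg (fract_nonneg v) p
    have hfloor' : (⌊u⌋ : ℝ) + 1 ≤ ⌊v⌋ := by exact_mod_cast hfloor
    linarith

namespace CircleDeg1Lift

noncomputable def floorAddFractRpow {p : ℝ} (hp : 0 < p) : CircleDeg1Lift where
  toFun u := ⌊u⌋ + fract u ^ p
  monotone' := (strictMono_floor_add_fract_rpow hp).monotone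
  map_add_one' u := by
    simp only [floor_add_one, fract_add_one, cast_add, cast_one]
    ring

@[simp]
theorem floorAddFractRpow_apply {p : ℝ} (hp : 0 < p) (u : ℝ) :
    floorAddFractRpow hp u = ⌊u⌋ + fract u ^ p :=
  rfl

theorem exists_strictMono_map_eq_of_mem_Ioo {m : ℤ} {s t : ℝ}
    (hs : s ∈ Set.Ioo (m : ℝ) (m + 1)) (ht : t ∈ Set.Ioo (m : ℝ) (m + 1)) :
    ∃ f : CircleDeg1Lift, StrictMono f ∧ f 0 = 0 ∧ f s = t := by
  have hfloor : ⌊s⌋ = m := floor_eq_iff.mpr ⟨hs.1.le, hs.2⟩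
  have hs₀ : 0 < s - m := sub_pos.mpr hs.1
  have hlog_s : Real.log (s - m) < 0 := Real.log_neg hs₀ (by linarith [hs.2])
  have hlog_t : Real.log (t - m) < 0 := Real.log_neg (by linarith [ht.1]) (by linarith [ht.2])
  have hp : 0 < Real.log (t - m) / Real.log (s - m) := div_pos_of_neg_of_neg hlog_t hlog_s
  refine ⟨floorAddFractRpow hp, strictMono_floor_add_fract_rpow hp, ?_, ?_⟩
  · simp [Real.zero_rpow hp.ne']
  · have hpow : (s - m) ^ (Real.log (t - m) / Real.log (s - m)) = t - m := by
      rw [Real.rpow_def_of_pos hs₀, mul_div_cancel₀ _ hlog_s.ne,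
        Real.exp_log (by linarith [ht.1])]
    rw [floorAddFractRpow_apply, fract, hfloor, hpow]
    ring

variable (f : CircleDeg1Lift) (hf : StrictMono f)
include hf

theorem mem_regionSimplex_map {r : ℕ} {z : Fin (r + 1) → Prop}
    {ρ : Fin (r + 1) → Fin (r + 1) → Prop} {δ : Fin (r + 1) → ℝ}
    (hδ : δ ∈ regionSimplex z ρ) (α : ℝ) :
    (fun i => f (δ i + α) - f α) ∈ regionSimplex z ρ := by
  obtain ⟨hunit, hzero, horder⟩ := hδ
  refine ⟨fun i => ⟨?_, ?_⟩, fun i => ?_, fun i j => ?_⟩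
  · exact sub_nonneg.mpr (f.mono (le_add_of_nonneg_left (hunit i).1))
  · have := hf (show δ i + α < α + 1 by linarith [(hunit i).2])
    rw [f.map_add_one] at this
    linarith
  · rw [sub_eq_zero, hf.injective.eq_iff, add_eq_right, hzero]
  · rw [sub_le_sub_iff_right, hf.le_iff_le, add_le_add_iff_right, horder]

theorem comp_mem_simplicialTrail (h0 : f 0 = 0) {r : ℕ} {n : Fin (r + 1) → ℕ}
    {z : Fin (r + 1) → Prop} {ρ : Fin (r + 1) → Fin (r + 1) → Prop} {x : Fin (r + 1) → ℝ}
    (hx : x ∈ simplicialTrail n (regionSimplex z ρ)) :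
    f ∘ x ∈ simplicialTrail n (regionSimplex z ρ) := by
  obtain ⟨δ, hδ, α, hα, hx⟩ := hx
  refine ⟨_, f.mem_regionSimplex_map hf hδ α, f α, h0 ▸ f.mono hα, fun i => ?_⟩
  rw [comp_apply, hx i, add_assoc, f.map_nat_add]
  ring

end CircleDeg1Lift

/-- The projection to the `t`-axis (coordinate `0`) of the intersection of a
finite union of simplicial trails with a guard polyhedron is a union of
intervals with integral endpoints: its intersection with each open unit
interval `(m, m+1)` is all or nothing. -/
theorem stmt5 {r : ℕ} {ι : Type*} (I : Finset ι)
    (n : ι → Fin (r + 1) → ℕ)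
    (z : ι → Fin (r + 1) → Prop) (ρ : ι → Fin (r + 1) → Fin (r + 1) → Prop)
    (J : Type*) (Jfin : Finset J)
    (gi : J → Fin (r + 1)) (gop : J → CmpOp) (gn : J → ℕ) :
    let T : Set (Fin (r + 1) → ℝ) :=
      (⋃ i ∈ I, simplicialTrail (n i) (regionSimplex (z i) (ρ i))) ∩
        {x | ∀ j ∈ Jfin, (gop j).sat (x (gi j)) ((gn j : ℝ))}
    let P : Set ℝ := {t | ∃ x ∈ T, x 0 = t}
    ∀ m : ℤ, (∀ t ∈ Set.Ioo (m : ℝ) (m + 1), t ∉ P) ∨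
      (∀ t ∈ Set.Ioo (m : ℝ) (m + 1), t ∈ P) := by
  intro T P m
  refine or_iff_not_imp_left.mpr fun hP => ?_
  push Not at hP
  obtain ⟨s, hs, x, ⟨hx_trail, hx_guard⟩, rfl⟩ := hP
  intro t ht
  obtain ⟨f, hf, hf0, hfx⟩ := CircleDeg1Lift.exists_strictMono_map_eq_of_mem_Ioo hs ht
  have hf_nat (k : ℕ) : f k = k := by simpa [hf0] using f.map_add_nat 0 k
  refine ⟨f ∘ x, ⟨?_, fun j hj => ?_⟩, hfx⟩
  · obtain ⟨i, hi, hxi⟩ := Set.mem_iUnion₂.mp hx_trail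
    exact Set.mem_iUnion₂.mpr ⟨i, hi, f.comp_mem_simplicialTrail hf hf0 hxi⟩
  · rw [comp_apply, ← hf_nat, CmpOp.sat_map_iff hf]
    exact hx_guard j hj
end

section
/- Region equivalence is preserved by equal time elapse in the following sense: if x and y are region-equivalent points of ℝ^{r+1} (all coordinates below M+1, same integer parts, same fractional-part ordering with the same zero pattern), then for every d ≥ 0 there exists d' ≥ 0 such that x + d·1 and y + d'·1 are region-equivalent. -/
/-!
Splitting off `⌊d⌋`, which raises all integer parts alike, leaves a delay `δ ∈ [0, 1)`. Adding `δ`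
carries exactly the clocks with fractional part `≥ 1 - δ` over an integer and rotates the fractional
parts cyclically at the cut `1 - δ`, so the region reached depends only on where `1 - δ` sits among
the fractional parts. Those of `x` and `y`, matched up, form a finite partial order isomorphism of
`ℝ`; by the back-and-forth extension property it extends to `1 - δ`, matched with some `1 - δ'`, and
then `x + δ` and `y + δ'` are region equivalent.
-/

/-- Region equivalence: same integer parts, same zero pattern and the same weak
ordering of the fractional parts. -/
def regEquiv {m : ℕ} (x y : Fin m → ℝ) : Prop :=
  (∀ i, ⌊x i⌋ = ⌊y i⌋) ∧
  (∀ i, Int.fract (x i) = 0 ↔ Int.fract (y i) = 0) ∧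
  (∀ i j, Int.fract (x i) ≤ Int.fract (x j) ↔ Int.fract (y i) ≤ Int.fract (y j))

theorem cmp_eq_cmp_of_le_iff_le {α β : Type*} [LinearOrder α] [LinearOrder β] {a b : α} {c d : β}
    (h₁ : a ≤ b ↔ c ≤ d) (h₂ : b ≤ a ↔ d ≤ c) : cmp a b = cmp c d := by
  rcases lt_trichotomy a b with hab | rfl | hab
  · rw [hab.cmp_eq_lt, eq_comm, cmp_eq_lt_iff, lt_iff_le_not_ge, ← h₁, ← h₂]
    exact ⟨hab.le, hab.not_ge⟩
  · rw [cmp_self_eq_eq, eq_comm, cmp_eq_eq_iff]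
    exact le_antisymm (h₁.1 le_rfl) (h₂.1 le_rfl)
  · rw [hab.cmp_eq_gt, eq_comm, cmp_eq_gt_iff, lt_iff_le_not_ge, ← h₁, ← h₂]
    exact ⟨hab.le, hab.not_ge⟩

namespace Int

variable {R : Type*} [Field R] [LinearOrder R] [IsStrictOrderedRing R] [FloorRing R] {u v δ : R}

theorem floor_add_of_nonneg_of_lt_one (hδ₀ : 0 ≤ δ) (hδ₁ : δ < 1) :
    ⌊u + δ⌋ = ⌊u⌋ + if 1 - δ ≤ fract u then 1 else 0 := by
  rw [floor_eq_iff]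
  have := floor_add_fract u
  have := fract_lt_one u
  have := fract_nonneg u
  split_ifs <;> push_cast <;> constructor <;> linarith

theorem fract_add_of_nonneg_of_lt_one (hδ₀ : 0 ≤ δ) (hδ₁ : δ < 1) :
    fract (u + δ) = if 1 - δ ≤ fract u then fract u + δ - 1 else fract u + δ := by
  rw [← self_sub_floor, floor_add_of_nonneg_of_lt_one hδ₀ hδ₁, ← self_sub_floor u]
  split_ifs <;> push_cast <;> ring

theorem fract_add_eq_zero_iff (hδ₀ : 0 ≤ δ) (hδ₁ : δ < 1) :
    fract (u + δ) = 0 ↔ fract u = 1 - δ ∨ fract u = 0 ∧ δ = 0 := by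
  rw [fract_add_of_nonneg_of_lt_one hδ₀ hδ₁]
  have := fract_nonneg u
  split_ifs <;> grind

theorem fract_add_le_fract_add_iff (hδ₀ : 0 ≤ δ) (hδ₁ : δ < 1) :
    fract (u + δ) ≤ fract (v + δ) ↔
      1 - δ ≤ fract u ∧ ¬ 1 - δ ≤ fract v ∨
        (1 - δ ≤ fract u ↔ 1 - δ ≤ fract v) ∧ fract u ≤ fract v := by
  rw [fract_add_of_nonneg_of_lt_one hδ₀ hδ₁, fract_add_of_nonneg_of_lt_one hδ₀ hδ₁]
  have := fract_nonneg u
  have := fract_nonneg v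
  have := fract_lt_one u
  have := fract_lt_one v
  split_ifs <;> grind

end Int

open Int

section RegionEquivalence

variable {m : ℕ} {x y : Fin m → ℝ}

theorem regEquiv.add_intCast (h : regEquiv x y) (n : ℤ) :
    regEquiv (fun i => x i + n) (fun i => y i + n) := by
  obtain ⟨hfl, hz, hord⟩ := h
  simp only [regEquiv, floor_add_intCast, fract_add_intCast]
  exact ⟨fun i => by rw [hfl i], hz, hord⟩

theorem regEquiv.add_of_cmp_eq_cmp (h : regEquiv x y) {δ δ' : ℝ} (hδ₀ : 0 ≤ δ) (hδ₁ : δ < 1)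
    (hδ'₀ : 0 ≤ δ') (hδ'₁ : δ' < 1) (hzero : δ = 0 ↔ δ' = 0)
    (hcut : ∀ i, cmp (fract (x i)) (1 - δ) = cmp (fract (y i)) (1 - δ')) :
    regEquiv (fun i => x i + δ) (fun i => y i + δ') := by
  obtain ⟨hfl, hz, hord⟩ := h
  have hle i := le_iff_le_of_cmp_eq_cmp (cmp_eq_cmp_symm.1 (hcut i))
  have heq i := eq_iff_eq_of_cmp_eq_cmp (hcut i)
  refine ⟨fun i => ?_, fun i => ?_, fun i j => ?_⟩
  · simp only [floor_add_of_nonneg_of_lt_one hδ₀ hδ₁, floor_add_of_nonneg_of_lt_one hδ'₀ hδ'₁,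
      hfl, hle]
  · simp only [fract_add_eq_zero_iff hδ₀ hδ₁, fract_add_eq_zero_iff hδ'₀ hδ'₁, heq, hz, hzero]
  · simp only [fract_add_le_fract_add_iff hδ₀ hδ₁, fract_add_le_fract_add_iff hδ'₀ hδ'₁, hle, hord]

/- The endpoints `0` and `1` are included so that the cut matched with `1 - δ` below lies in
`(0, 1]` and equals `1` exactly when `δ = 0`. -/
noncomputable def regEquiv.fractPartialIso (h : regEquiv x y) : Order.PartialIso ℝ ℝ :=
  ⟨insert (0, 0) (insert (1, 1) (Finset.univ.image fun i => (fract (x i), fract (y i)))), by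
    obtain ⟨-, hz, hord⟩ := h
    have hz' i : fract (x i) ≤ 0 ↔ fract (y i) ≤ 0 := by
      rw [LE.le.ge_iff_eq' (fract_nonneg (x i)), LE.le.ge_iff_eq' (fract_nonneg (y i)), hz]
    simp only [Finset.mem_insert, Finset.mem_image, Finset.mem_univ, true_and]
    rintro p (rfl | rfl | ⟨i, rfl⟩) q (rfl | rfl | ⟨j, rfl⟩) <;>
      refine cmp_eq_cmp_of_le_iff_le ?_ ?_ <;>
      simp [fract_nonneg, (fract_lt_one _).le, (fract_lt_one _).not_ge, hz', hord]⟩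

theorem regEquiv.exists_add_of_lt_one (h : regEquiv x y) {δ : ℝ} (hδ₀ : 0 ≤ δ) (hδ₁ : δ < 1) :
    ∃ δ', 0 ≤ δ' ∧ δ' < 1 ∧ regEquiv (fun i => x i + δ) (fun i => y i + δ') := by
  obtain ⟨b, hb⟩ := h.fractPartialIso.exists_across (1 - δ)
  have hb₀ : 0 < b :=
    (lt_iff_lt_of_cmp_eq_cmp (hb (0, 0) (by simp [fractPartialIso]))).1 (by linarith)
  have h₁ : cmp (1 : ℝ) (1 - δ) = cmp 1 b := hb (1, 1) (by simp [fractPartialIso])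
  have hb₁ : b ≤ 1 := (le_iff_le_of_cmp_eq_cmp (cmp_eq_cmp_symm.1 h₁)).1 (by linarith)
  have hzero : δ = 0 ↔ 1 - b = 0 := by
    rw [sub_eq_zero, eq_comm, ← eq_iff_eq_of_cmp_eq_cmp h₁]
    constructor <;> intro <;> linarith
  refine ⟨1 - b, by linarith, by linarith,
    h.add_of_cmp_eq_cmp hδ₀ hδ₁ (by linarith) (by linarith) hzero fun i => ?_⟩
  rw [sub_sub_cancel]
  exact hb _ <| Finset.mem_insert_of_mem <| Finset.mem_insert_of_mem <|
    Finset.mem_image_of_mem _ (Finset.mem_univ i)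

end RegionEquivalence

/-- Region equivalence is preserved by equal time elapse: for every delay
`d ≥ 0` there is a delay `d' ≥ 0` matching it. -/
theorem stmt7 {r : ℕ} (x y : Fin (r + 1) → ℝ) (h : regEquiv x y) :
    ∀ d : ℝ, 0 ≤ d → ∃ d' : ℝ, 0 ≤ d' ∧
      regEquiv (fun i => x i + d) (fun i => y i + d') := by
  intro d hd
  obtain ⟨δ', hδ'₀, -, hδ'⟩ := h.exists_add_of_lt_one (fract_nonneg d) (fract_lt_one d)
  refine ⟨δ' + ⌊d⌋, add_nonneg hδ'₀ (mod_cast floor_nonneg.2 hd), ?_⟩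
  simpa only [add_assoc, fract_add_floor] using hδ'.add_intCast ⌊d⌋
end

section
/- Let A ⊆ ℝ≥0 be eventually L₁-periodic after time t₁ and B ⊆ ℝ≥0 eventually L₂-periodic after time t₂ (with L₁, L₂ positive integers). Then A ⊆ B if and only if A ∩ [0, t + L] ⊆ B ∩ [0, t + L], where t = max(t₁, t₂) and L = lcm(L₁, L₂). In particular, if membership in A ∩ ℚ and B ∩ ℚ on [0, t + L] is decidable, inclusion A ⊆ B is decidable when A and B are unions of integer points and open unit intervals with integer endpoints. -/
def evPer (S : Set ℝ) (t₀ L : ℝ) : Prop := ∀ s : ℝ, t₀ ≤ s → (s ∈ S ↔ s + L ∈ S)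

namespace evPer

variable {S : Set ℝ} {t₀ L : ℝ}

theorem mono {t : ℝ} (hS : evPer S t₀ L) (ht : t₀ ≤ t) : evPer S t L :=
  fun s hs => hS s (ht.trans hs)

theorem mem_sub_iff (hS : evPer S t₀ L) {s : ℝ} (hs : t₀ + L ≤ s) : s - L ∈ S ↔ s ∈ S := by
  simpa using hS (s - L) (by linarith)

theorem nat_mul (hS : evPer S t₀ L) (hL : 0 ≤ L) (n : ℕ) : evPer S t₀ (n * L) := by
  induction n with
  | zero => simp [evPer]
  | succ n ih =>
    intro s hs
    rw [hS s hs, ih (s + L) (by linarith), Nat.cast_succ]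
    ring_nf

theorem of_dvd {L₀ M : ℕ} (hS : evPer S t₀ L₀) (hdvd : L₀ ∣ M) : evPer S t₀ M := by
  obtain ⟨k, rfl⟩ := hdvd
  rw [Nat.cast_mul, mul_comm]
  exact hS.nat_mul (Nat.cast_nonneg _) k

end evPer

/-- Every point beyond `t + L` is carried back into `[t, t + L]` by whole periods, along which
membership in `A` and in `B` is preserved. -/
theorem subset_of_inter_Iic_subset {A B : Set ℝ} {t L : ℝ} (hL : 0 < L)
    (hA : evPer A t L) (hB : evPer B t L) (h : A ∩ Set.Iic (t + L) ⊆ B) : A ⊆ B := by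
  have below : ∀ n : ℕ, ∀ s ∈ A, s ≤ t + n * L → s ∈ B := by
    intro n
    induction n with
    | zero => exact fun s hsA hs => h ⟨hsA, Set.mem_Iic.2 (by
        rw [Nat.cast_zero, zero_mul, add_zero] at hs; linarith)⟩
    | succ n ih =>
      intro s hsA hs
      by_cases hsL : s ≤ t + L
      · exact h ⟨hsA, hsL⟩
      · have hts : t + L ≤ s := by linarith
        rw [← hB.mem_sub_iff hts]
        exact ih _ ((hA.mem_sub_iff hts).2 hsA) (by push_cast at hs; linarith)
  intro s hsA
  obtain ⟨n, hn⟩ := Archimedean.arch (s - t) hL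
  exact below n s hsA (by rw [nsmul_eq_mul] at hn; linarith)

theorem stmt16_general (A B : Set ℝ) (hA0 : A ⊆ Set.Ici 0)
    (t₁ t₂ : ℝ)
    (L₁ L₂ : ℕ) (hL₁ : 0 < L₁) (hL₂ : 0 < L₂)
    (hA : evPer A t₁ L₁) (hB : evPer B t₂ L₂) :
    A ⊆ B ↔
      A ∩ Set.Icc 0 (max t₁ t₂ + (Nat.lcm L₁ L₂ : ℝ)) ⊆
        B ∩ Set.Icc 0 (max t₁ t₂ + (Nat.lcm L₁ L₂ : ℝ)) := by
  refine ⟨fun h => Set.inter_subset_inter_left _ h, fun h => ?_⟩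
  have hL : (0 : ℝ) < Nat.lcm L₁ L₂ := by exact_mod_cast Nat.lcm_pos hL₁ hL₂
  refine subset_of_inter_Iic_subset hL ((hA.of_dvd (Nat.dvd_lcm_left L₁ L₂)).mono (le_max_left _ _))
    ((hB.of_dvd (Nat.dvd_lcm_right L₁ L₂)).mono (le_max_right _ _)) ?_
  exact fun s ⟨hsA, hs⟩ => (h ⟨hsA, hA0 hsA, hs⟩).1

/-- Inclusion of eventually periodic subsets of `ℝ≥0` reduces to inclusion on
the bounded window `[0, max t₁ t₂ + lcm L₁ L₂]`. -/
theorem stmt16 (A B : Set ℝ) (hA0 : A ⊆ Set.Ici 0) (hB0 : B ⊆ Set.Ici 0)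
    (t₁ t₂ : ℝ) (ht₁ : 0 ≤ t₁) (ht₂ : 0 ≤ t₂)
    (L₁ L₂ : ℕ) (hL₁ : 0 < L₁) (hL₂ : 0 < L₂)
    (hA : evPer A t₁ L₁) (hB : evPer B t₂ L₂) :
    A ⊆ B ↔
      A ∩ Set.Icc 0 (max t₁ t₂ + (Nat.lcm L₁ L₂ : ℝ)) ⊆
        B ∩ Set.Icc 0 (max t₁ t₂ + (Nat.lcm L₁ L₂ : ℝ)) :=
  stmt16_general A B hA0 t₁ t₂ L₁ L₂ hL₁ hL₂ hA hB
end

section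
/- If S ⊆ ℝ≥0 is a union of integer points and open unit intervals with integer endpoints, is eventually L-periodic after integer time t_per, and contains the integer point n and the interval (n, n+1) for every integer 0 ≤ n < t_per + L, then S = ℝ≥0. -/
/-! Stepping back by `L` keeps a point `x ≥ t + L` inside `[t, ∞)`, so by induction periodicity
carries membership from `[0, t + L)` to every `[0, t + (k + 1) • L)`, and these exhaust `[0, ∞)`
by the Archimedean property. The check on integer points and unit intervals covers `[0, t + L)`
because every `x ≥ 0` is either `⌊x⌋₊` or lies in `(⌊x⌋₊, ⌊x⌋₊ + 1)`. -/

open Set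

section Periodic

variable {α : Type*} [AddCommGroup α] [LinearOrder α] [IsOrderedAddMonoid α]

theorem Ico_add_succ_nsmul_subset_of_periodic {S : Set α} {t L : α} (ht : 0 ≤ t)
    (hper : ∀ s, t ≤ s → s ∈ S → s + L ∈ S) (hfull : Ico 0 (t + L) ⊆ S) :
    ∀ k : ℕ, Ico 0 (t + (k + 1) • L) ⊆ S
  | 0 => by simpa using hfull
  | k + 1 => by
    rintro x ⟨hx0, hx⟩
    rcases lt_or_ge x (t + L) with hxL | hxL
    · exact hfull ⟨hx0, hxL⟩
    · have hprev : x - L ∈ Ico 0 (t + (k + 1) • L) := by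
        constructor
        · rw [sub_nonneg]; exact le_trans (le_add_of_nonneg_left ht) hxL
        · rw [sub_lt_iff_lt_add, add_assoc, ← succ_nsmul]; exact hx
      simpa using hper (x - L) (le_sub_iff_add_le.2 hxL)
        (Ico_add_succ_nsmul_subset_of_periodic ht hper hfull k hprev)

theorem Ici_subset_of_periodic [Archimedean α] {S : Set α} {t L : α} (ht : 0 ≤ t) (hL : 0 < L)
    (hper : ∀ s, t ≤ s → s ∈ S → s + L ∈ S) (hfull : Ico 0 (t + L) ⊆ S) :
    Ici 0 ⊆ S := by
  intro x hx
  obtain ⟨k, hk⟩ := exists_lt_nsmul hL (x - t)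
  refine Ico_add_succ_nsmul_subset_of_periodic ht hper hfull k ⟨hx, ?_⟩
  calc x < t + k • L := sub_lt_iff_lt_add'.1 hk
    _ ≤ t + (k + 1) • L := add_le_add_right (nsmul_le_nsmul_left hL.le k.le_succ) t

end Periodic

theorem Ico_subset_of_forall_lt_nat {α : Type*} [Semiring α] [LinearOrder α]
    [IsStrictOrderedRing α] [FloorSemiring α] {S : Set α} {N : ℕ}
    (h : ∀ n < N, (n : α) ∈ S ∧ Ioo (n : α) (n + 1) ⊆ S) : Ico 0 (N : α) ⊆ S := by
  intro x ⟨hx0, hxN⟩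
  obtain ⟨hn, hIoo⟩ := h ⌊x⌋₊ ((Nat.floor_lt hx0).2 hxN)
  rcases (Nat.floor_le hx0).eq_or_lt with heq | hlt
  · exact heq ▸ hn
  · exact hIoo ⟨hlt, Nat.lt_floor_add_one x⟩

theorem stmt17_general (S : Set ℝ) (hS0 : S ⊆ Set.Ici 0)
    (tper L : ℕ) (hL : 0 < L)
    (hper : ∀ s : ℝ, (tper : ℝ) ≤ s → (s ∈ S ↔ s + L ∈ S))
    (hfull : ∀ n : ℕ, n < tper + L →
      ((n : ℝ) ∈ S ∧ Set.Ioo (n : ℝ) (n + 1) ⊆ S)) :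
    S = Set.Ici 0 := by
  refine hS0.antisymm (Ici_subset_of_periodic tper.cast_nonneg (Nat.cast_pos.2 hL)
    (fun s hs => (hper s hs).1) ?_)
  exact_mod_cast Ico_subset_of_forall_lt_nat hfull

/-- Finite-check criterion for universality of a timestamp: a union of integer
points and open unit intervals that is eventually `L`-periodic after `t_per`
and is full below `t_per + L` equals all of `ℝ≥0`. -/
theorem stmt17 (S : Set ℝ) (hS0 : S ⊆ Set.Ici 0)
    (tper L : ℕ) (htper : 0 < tper) (hL : 0 < L)
    (hstruct : ∀ n : ℕ, S ∩ Set.Ioo (n : ℝ) (n + 1) = ∅ ∨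
      Set.Ioo (n : ℝ) (n + 1) ⊆ S)
    (hper : ∀ s : ℝ, (tper : ℝ) ≤ s → (s ∈ S ↔ s + L ∈ S))
    (hfull : ∀ n : ℕ, n < tper + L →
      ((n : ℝ) ∈ S ∧ Set.Ioo (n : ℝ) (n + 1) ⊆ S)) :
    S = Set.Ici 0 :=
  stmt17_general S hS0 tper L hL hper hfull
end
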